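/- For a ∈ (-1,1), sinc_a(t) = (1+a) sinc(t/2) · Re(F(e^{it}) e^{it/2}), where F(z) = Σ_{n≥0} a^n z^n and sinc(t) = sin(t)/t. -/

import Mathlib

/-!
Summing the geometric series, `F(e^{it}) e^{it/2} = e^{it/2} / (1 - a e^{it})`, whose real part is
`(1 - a) cos(t/2) / |1 - a e^{it}|²` because `cos t cos(t/2) + sin t sin(t/2) = cos(t/2)`.
Multiplying by `1 + a` gives `p_a(t) cos(t/2)`, and `sinc t = sinc(t/2) cos(t/2)` by the double-angle
formula.
-/

noncomputable def poissonKer (a t : ℝ) : ℝ :=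
  (1 - a ^ 2) / (1 - 2 * a * Real.cos t + a ^ 2)

noncomputable def rsinc (t : ℝ) : ℝ := if t = 0 then 1 else Real.sin t / t

noncomputable def sincA (a t : ℝ) : ℝ := poissonKer a t * rsinc t

open Complex

lemma rsinc_eq_rsinc_half_mul_cos (t : ℝ) : rsinc t = rsinc (t / 2) * Real.cos (t / 2) := by
  rcases eq_or_ne t 0 with rfl | ht
  · simp [rsinc]
  · have ht2 : t / 2 ≠ 0 := div_ne_zero ht two_ne_zero
    have hsin : Real.sin t = 2 * Real.sin (t / 2) * Real.cos (t / 2) := by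
      rw [← Real.sin_two_mul, mul_div_cancel₀ t two_ne_zero]
    rw [rsinc, rsinc, if_neg ht, if_neg ht2, hsin]
    field_simp

lemma normSq_one_sub_ofReal_mul_exp_mul_I (a t : ℝ) :
    normSq (1 - a * exp (t * I)) = 1 - 2 * a * Real.cos t + a ^ 2 := by
  rw [normSq_apply]
  simp only [sub_re, sub_im, one_re, one_im, re_ofReal_mul, im_ofReal_mul,
    exp_ofReal_mul_I_re, exp_ofReal_mul_I_im]
  linear_combination a ^ 2 * Real.sin_sq_add_cos_sq t

lemma re_inv_one_sub_ofReal_mul_exp_mul_I_mul_exp_half (a t : ℝ) :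
    ((1 - a * exp (t * I))⁻¹ * exp ((t / 2 : ℝ) * I)).re
      = (1 - a) * Real.cos (t / 2) / (1 - 2 * a * Real.cos t + a ^ 2) := by
  have hcos : Real.cos t * Real.cos (t / 2) + Real.sin t * Real.sin (t / 2) = Real.cos (t / 2) := by
    rw [← Real.cos_sub, sub_half]
  rw [mul_re, inv_re, inv_im, normSq_one_sub_ofReal_mul_exp_mul_I]
  simp only [sub_re, sub_im, one_re, one_im, re_ofReal_mul, im_ofReal_mul,
    exp_ofReal_mul_I_re, exp_ofReal_mul_I_im]
  rw [div_mul_eq_mul_div, div_mul_eq_mul_div, ← sub_div]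
  congr 1
  linear_combination -a * hcos

/-- sinc_a(t) = (1+a) sinc(t/2) Re(F(e^{it}) e^{it/2}),
where F(z) = Σ_{n≥0} aⁿ zⁿ. -/
theorem sincA_via_F (a : ℝ) (ha : a ∈ Set.Ioo (-1 : ℝ) 1) (t : ℝ) :
    sincA a t = (1 + a) * rsinc (t / 2) *
      ((∑' n : ℕ, (a : ℂ) ^ n * Complex.exp (Complex.I * t) ^ n) *
        Complex.exp (Complex.I * t / 2)).re := by
  have hnorm : ‖(a : ℂ) * exp (t * I)‖ < 1 := by
    rw [norm_mul, norm_exp_ofReal_mul_I, mul_one, norm_real, Real.norm_eq_abs, abs_lt]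
    exact ha
  have hF : ∑' n : ℕ, (a : ℂ) ^ n * exp (I * t) ^ n = (1 - a * exp (t * I))⁻¹ := by
    simpa only [mul_pow, mul_comm I] using tsum_geometric_of_norm_lt_one hnorm
  have hhalf : I * t / 2 = (t / 2 : ℝ) * I := by push_cast; ring
  rw [hF, hhalf, re_inv_one_sub_ofReal_mul_exp_mul_I_mul_exp_half, sincA, poissonKer,
    rsinc_eq_rsinc_half_mul_cos]
  ring
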